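/- arXiv:2203.11057 — 5 statements merged into one kernel-verified Lean document; each statement's English description precedes it below -/
import Mathlib

section
/- Let u_max > 0 and α ≥ 1 be real constants and let e₁ = (1,0), e₂ = (0,1). Then for every v ∈ ℝ² there exists a control u ∈ ℝ² with ‖u‖_∞ ≤ u_max such that for each of the four normals n ∈ {e₁, e₂, −e₁, −e₂}, ⟪v, n⟫ · (1 + (α/u_max) · ⟪u, n⟫) ≤ 0. -/
open scoped RealInnerProductSpace

noncomputable def e1 : EuclideanSpace ℝ (Fin 2) := EuclideanSpace.single 0 1
noncomputable def e2 : EuclideanSpace ℝ (Fin 2) := EuclideanSpace.single 1 1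

/-- Infinity norm on ℝ²: `‖u‖_∞ = max (|⟪u, e₁⟫|) (|⟪u, e₂⟫|)`. -/
noncomputable def infNorm (u : EuclideanSpace ℝ (Fin 2)) : ℝ :=
  max |⟪u, e1⟫| |⟪u, e2⟫|

lemma inner_e1_e1 : ⟪e1, e1⟫ = (1:ℝ) := by
  simp [e1, EuclideanSpace.inner_single_right, EuclideanSpace.single_apply]

lemma inner_e2_e2 : ⟪e2, e2⟫ = (1:ℝ) := by
  simp [e2, EuclideanSpace.inner_single_right, EuclideanSpace.single_apply]

lemma inner_e1_e2 : ⟪e1, e2⟫ = (0:ℝ) := by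
  simp [e1, e2, EuclideanSpace.inner_single_right, EuclideanSpace.single_apply]

lemma inner_e2_e1 : ⟪e2, e1⟫ = (0:ℝ) := by
  simp [e1, e2, EuclideanSpace.inner_single_right, EuclideanSpace.single_apply]

lemma abs_sign_le (x : ℝ) : |Real.sign x| ≤ 1 := by
  rcases Real.sign_apply_eq x with h|h|h <;> rw [h] <;> norm_num

lemma sign_key (x : ℝ) : x * (1 - Real.sign x) ≤ 0 := by
  rcases lt_trichotomy x 0 with h | h | h
  · rw [Real.sign_of_neg h]; nlinarith
  · simp [h]
  · rw [Real.sign_of_pos h]; simp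

/-- Pointwise existence content of Theorem 1 (recursive feasibility): at every
velocity state there is an admissible control making all four wall
stopping-distance constraints nonincreasing. -/
theorem stmt_3 (umax α : ℝ) (humax : 0 < umax) (hα : 1 ≤ α) :
    ∀ v : EuclideanSpace ℝ (Fin 2), ∃ u : EuclideanSpace ℝ (Fin 2),
      infNorm u ≤ umax ∧
      ∀ n ∈ ({e1, e2, -e1, -e2} : Set (EuclideanSpace ℝ (Fin 2))),
        ⟪v, n⟫ * (1 + α / umax * ⟪u, n⟫) ≤ 0 := by
  intro v
  have hα0 : (0:ℝ) < α := lt_of_lt_of_le one_pos hα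
  set s1 := Real.sign ⟪v, e1⟫ with hs1
  set s2 := Real.sign ⟪v, e2⟫ with hs2
  refine ⟨(-(umax / α) * s1) • e1 + (-(umax / α) * s2) • e2, ?_, ?_⟩
  · have hs1' : |s1| ≤ 1 := abs_sign_le _
    have hs2' : |s2| ≤ 1 := abs_sign_le _
    have h1 : ⟪(-(umax / α) * s1) • e1 + (-(umax / α) * s2) • e2, e1⟫ = -(umax / α) * s1 := by
      rw [inner_add_left, real_inner_smul_left, real_inner_smul_left, inner_e1_e1, inner_e2_e1]
      ring
    have h2 : ⟪(-(umax / α) * s1) • e1 + (-(umax / α) * s2) • e2, e2⟫ = -(umax / α) * s2 := by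
      rw [inner_add_left, real_inner_smul_left, real_inner_smul_left, inner_e2_e2, inner_e1_e2]
      ring
    have hle : umax / α ≤ umax := by
      rw [div_le_iff₀ hα0]; nlinarith
    have hpos : (0:ℝ) ≤ umax / α := le_of_lt (div_pos humax hα0)
    rw [infNorm, h1, h2]
    apply max_le <;>
    · rw [abs_mul, abs_neg, abs_of_nonneg hpos]
      calc umax / α * |_| ≤ umax / α * 1 := by
            first
            | exact mul_le_mul_of_nonneg_left hs1' hpos
            | exact mul_le_mul_of_nonneg_left hs2' hpos
        _ ≤ umax := by rw [mul_one]; exact hle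
  · have hcoef : α / umax * (umax / α) = 1 := by
      field_simp
    intro n hn
    have key : ∀ (w : EuclideanSpace ℝ (Fin 2)), ⟪(-(umax / α) * s1) • e1 + (-(umax / α) * s2) • e2, w⟫ = -(umax / α) * s1 * ⟪e1, w⟫ + -(umax / α) * s2 * ⟪e2, w⟫ := by
      intro w
      rw [inner_add_left, real_inner_smul_left, real_inner_smul_left]
    rcases hn with h | h | h | h
    all_goals subst h
    · rw [key, inner_e1_e1, inner_e2_e1]
      have : 1 + α / umax * (-(umax / α) * s1 * 1 + -(umax / α) * s2 * 0) = 1 - s1 := by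
        field_simp; ring
      rw [this]; exact sign_key _
    · rw [key, inner_e1_e2, inner_e2_e2]
      have : 1 + α / umax * (-(umax / α) * s1 * 0 + -(umax / α) * s2 * 1) = 1 - s2 := by
        field_simp; ring
      rw [this]; exact sign_key _
    · rw [inner_neg_right, inner_neg_right, key, inner_e1_e1, inner_e2_e1]
      have : 1 + α / umax * -(-(umax / α) * s1 * 1 + -(umax / α) * s2 * 0) = 1 + s1 := by
        field_simp; ring
      rw [this]
      have := sign_key (-⟪v, e1⟫)
      rw [Real.sign_neg] at this
      simpa [hs1, sub_neg_eq_add] using this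
    · rw [inner_neg_right, inner_neg_right, key, inner_e1_e2, inner_e2_e2]
      have : 1 + α / umax * -(-(umax / α) * s1 * 0 + -(umax / α) * s2 * 1) = 1 + s2 := by
        field_simp; ring
      rw [this]
      have := sign_key (-⟪v, e2⟫)
      rw [Real.sign_neg] at this
      simpa [hs2, sub_neg_eq_add] using this
end

section
/- Let u_max > 0 and α ≥ 1 be real constants, let the four normals be n₁ = e₁ = (1,0), n₂ = e₂ = (0,1), n₃ = −e₁, n₄ = −e₂ with offsets b₁, b₂, b₃, b₄ ∈ ℝ. Let p : ℝ → ℝ² be twice differentiable with v = p' and u = v', and define g_k(t) = (⟪p(t), n_k⟫ + b_k) + α⟪v(t), n_k⟫²/(2 u_max) for k = 1,…,4. Suppose g_k(t₀) ≤ 0 for all k, and suppose for all t ≥ t₀ and all k, ⟪v(t), n_k⟫ · (1 + (α/u_max) · ⟪u(t), n_k⟫) ≤ 0. Then for all t ≥ t₀ and all k, g_k(t) ≤ 0; in particular ⟪p(t), n_k⟫ + b_k ≤ 0 for all k, i.e., the position p(t) remains in the rectangular domain for all t ≥ t₀. -/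
open scoped RealInnerProductSpace

/-- The four outward wall normals of the axis-aligned rectangular domain. -/
noncomputable def walls : Fin 4 → EuclideanSpace ℝ (Fin 2) := ![e1, e2, -e1, -e2]

/-!
Along the trajectory, `g_k(t) = ⟪p, n_k⟫ + b_k + α⟪v, n_k⟫²/(2 u_max)` has derivative
`⟪v, n_k⟫ (1 + (α/u_max)⟪u, n_k⟫)`, so the hypothesis on the control says exactly that every
`g_k` is antitone on `[t₀, ∞)`; hence `g_k(t) ≤ g_k(t₀) ≤ 0`. The stopping-distance term is
nonnegative, so `g_k ≤ 0` also forces the position constraint `⟪p, n_k⟫ + b_k ≤ 0`.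
-/

section StoppingConstraint

variable {E : Type*} [NormedAddCommGroup E] [InnerProductSpace ℝ E]

noncomputable def stoppingConstraint (umax α b : ℝ) (n x w : E) : ℝ :=
  (⟪x, n⟫ + b) + α * ⟪w, n⟫ ^ 2 / (2 * umax)

lemma le_stoppingConstraint {umax α : ℝ} (humax : 0 < umax) (hα : 0 ≤ α) (b : ℝ) (n x w : E) :
    ⟪x, n⟫ + b ≤ stoppingConstraint umax α b n x w :=
  le_add_of_nonneg_right (by positivity)

lemma hasDerivAt_stoppingConstraint {umax : ℝ} (humax : umax ≠ 0) (α b : ℝ) (n : E)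
    {p v : ℝ → E} {a : E} {t : ℝ} (hp : HasDerivAt p (v t) t) (hv : HasDerivAt v a t) :
    HasDerivAt (fun s ↦ stoppingConstraint umax α b n (p s) (v s))
      (⟪v t, n⟫ * (1 + α / umax * ⟪a, n⟫)) t := by
  have hpn : HasDerivAt (fun s ↦ ⟪p s, n⟫) ⟪v t, n⟫ t := by
    simpa using hp.inner ℝ (hasDerivAt_const t n)
  have hvn : HasDerivAt (fun s ↦ ⟪v s, n⟫) ⟪a, n⟫ t := by
    simpa using hv.inner ℝ (hasDerivAt_const t n)
  refine ((hpn.add_const b).add (((hvn.pow 2).const_mul α).div_const (2 * umax))).congr_deriv ?_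
  field_simp
  ring

lemma stoppingConstraint_le_of_deriv_nonpos {umax : ℝ} (humax : umax ≠ 0) (α b : ℝ) (n : E)
    {p v u : ℝ → E} (hp : ∀ t, HasDerivAt p (v t) t) (hv : ∀ t, HasDerivAt v (u t) t)
    {t₀ : ℝ} (hder : ∀ t ≥ t₀, ⟪v t, n⟫ * (1 + α / umax * ⟪u t, n⟫) ≤ 0)
    {t : ℝ} (ht : t₀ ≤ t) :
    stoppingConstraint umax α b n (p t) (v t) ≤ stoppingConstraint umax α b n (p t₀) (v t₀) := by
  have hg s := hasDerivAt_stoppingConstraint humax α b n (hp s) (hv s)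
  refine antitoneOn_of_hasDerivWithinAt_nonpos (convex_Ici t₀)
    (fun s _ ↦ (hg s).continuousAt.continuousWithinAt) (fun s _ ↦ (hg s).hasDerivWithinAt)
    (fun s hs ↦ hder s ?_) Set.self_mem_Ici ht ht
  rw [interior_Ici] at hs
  exact le_of_lt hs

end StoppingConstraint

/-- Forward-invariance content of Theorem 1: a trajectory that initially satisfies
the stopping-distance constraints `g_k ≤ 0` of the four walls, and whose control
keeps each `g_k` nonincreasing (i.e. `⟪v, n_k⟫(1 + (α/u_max)⟪u, n_k⟫) ≤ 0`),
satisfies `g_k ≤ 0` — and in particular stays inside the rectangle — for all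
future time. -/
theorem stmt_4 (umax α : ℝ) (humax : 0 < umax) (hα : 1 ≤ α)
    (b : Fin 4 → ℝ)
    (p v u : ℝ → EuclideanSpace ℝ (Fin 2))
    (hp : ∀ t, HasDerivAt p (v t) t)
    (hv : ∀ t, HasDerivAt v (u t) t)
    (t₀ : ℝ)
    (h0 : ∀ k : Fin 4,
      (⟪p t₀, walls k⟫ + b k) + α * ⟪v t₀, walls k⟫ ^ 2 / (2 * umax) ≤ 0)
    (hder : ∀ t ≥ t₀, ∀ k : Fin 4,
      ⟪v t, walls k⟫ * (1 + α / umax * ⟪u t, walls k⟫) ≤ 0) :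
    ∀ t ≥ t₀, ∀ k : Fin 4,
      (⟪p t, walls k⟫ + b k) + α * ⟪v t, walls k⟫ ^ 2 / (2 * umax) ≤ 0 ∧
      ⟪p t, walls k⟫ + b k ≤ 0 := by
  intro t ht k
  have hg : stoppingConstraint umax α (b k) (walls k) (p t) (v t) ≤ 0 :=
    (stoppingConstraint_le_of_deriv_nonpos humax.ne' α (b k) (walls k) hp hv
      (fun s hs ↦ hder s hs k) ht).trans (h0 k)
  exact ⟨hg, (le_stoppingConstraint humax (zero_le_one.trans hα) _ _ _ _).trans hg⟩
end

section
/- (Lemma 1 of the paper.) Let u_max > 0 and α ≥ 1 be real constants, e₁ = (1,0), e₂ = (0,1). Let r, ṙ ∈ ℝ² with r ≠ 0 and set r̂ = r/‖r‖. Suppose that for every (x, y) ∈ {1/α, 1} × {1/α, 1} the inequality ‖ṙ‖ · (x · ⟪e₁, r̂⟫ + y · ⟪e₂, r̂⟫) ≥ ⟪ṙ, r̂⟫ fails (i.e., ‖ṙ‖(x⟪e₁, r̂⟫ + y⟪e₂, r̂⟫) < ⟪ṙ, r̂⟫ for all four corner pairs). Then there is no u ∈ ℝ² satisfying simultaneously: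 ‖u‖_∞ ≤ u_max, ⟪u, e₁⟫ ≤ −u_max/α, ⟪u, e₂⟫ ≤ −u_max/α, and (‖ṙ‖/u_max) · ⟪u, r̂⟫ + ⟪ṙ, r̂⟫ ≤ 0. -/
/-!
Write `a, b` for the coordinates of `r̂` and `tₖ = -⟪u, eₖ⟫ / u_max`. The bound `‖u‖_∞ ≤ u_max`
and the wall conditions put both `tₖ` in `[1/α, 1]`, and the swarming constraint reads
`⟪ṙ, r̂⟫ ≤ ‖ṙ‖ (t₁ a + t₂ b)`. A linear function on an interval is maximal at an endpoint, so some
corner `(x, y)` satisfies `t₁ a + t₂ b ≤ x a + y b`, and that corner condition holds.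
-/

open scoped RealInnerProductSpace

lemma inner_eq_inner_e1_mul_add_inner_e2_mul (u v : EuclideanSpace ℝ (Fin 2)) :
    ⟪u, v⟫ = ⟪u, e1⟫ * ⟪e1, v⟫ + ⟪u, e2⟫ * ⟪e2, v⟫ := by
  simp [e1, e2, PiLp.inner_apply, Fin.sum_univ_two, mul_comm]

lemma exists_mem_pair_mul_le {lo hi t : ℝ} (ht : t ∈ Set.Icc lo hi) (a : ℝ) :
    ∃ x ∈ ({lo, hi} : Set ℝ), t * a ≤ x * a := by
  rcases le_total 0 a with ha | ha
  · exact ⟨hi, by simp, mul_le_mul_of_nonneg_right ht.2 ha⟩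
  · exact ⟨lo, by simp, mul_le_mul_of_nonpos_right ht.1 ha⟩

lemma neg_div_mem_Icc {umax α w : ℝ} (humax : 0 < umax) (hbound : |w| ≤ umax)
    (hwall : w ≤ -(umax / α)) : -w / umax ∈ Set.Icc (1 / α) 1 := by
  constructor
  · rw [le_div_iff₀ humax, one_div_mul_eq_div]
    linarith
  · rw [div_le_one humax]
    exact (neg_le_abs w).trans hbound

theorem stmt_9_general (umax α : ℝ) (humax : 0 < umax)
    (r rdot : EuclideanSpace ℝ (Fin 2))
    (hcorner : ∀ x ∈ ({1 / α, 1} : Set ℝ), ∀ y ∈ ({1 / α, 1} : Set ℝ),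
      ‖rdot‖ * (x * ⟪e1, ‖r‖⁻¹ • r⟫ + y * ⟪e2, ‖r‖⁻¹ • r⟫)
        < ⟪rdot, ‖r‖⁻¹ • r⟫) :
    ¬ ∃ u : EuclideanSpace ℝ (Fin 2),
      infNorm u ≤ umax ∧
      ⟪u, e1⟫ ≤ -(umax / α) ∧
      ⟪u, e2⟫ ≤ -(umax / α) ∧
      (‖rdot‖ / umax) * ⟪u, ‖r‖⁻¹ • r⟫ + ⟪rdot, ‖r‖⁻¹ • r⟫ ≤ 0 := by
  rintro ⟨u, hbound, hwall₁, hwall₂, hswarm⟩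
  set a := ⟪e1, ‖r‖⁻¹ • r⟫
  set b := ⟪e2, ‖r‖⁻¹ • r⟫
  have ht₁ := neg_div_mem_Icc humax ((le_max_left _ _).trans hbound) hwall₁
  have ht₂ := neg_div_mem_Icc humax ((le_max_right _ _).trans hbound) hwall₂
  set t₁ := -⟪u, e1⟫ / umax
  set t₂ := -⟪u, e2⟫ / umax
  obtain ⟨x, hx, hxa⟩ := exists_mem_pair_mul_le ht₁ a
  obtain ⟨y, hy, hyb⟩ := exists_mem_pair_mul_le ht₂ b
  have hswarm' : ⟪rdot, ‖r‖⁻¹ • r⟫ ≤ ‖rdot‖ * (t₁ * a + t₂ * b) := by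
    rw [inner_eq_inner_e1_mul_add_inner_e2_mul] at hswarm
    linarith [show ‖rdot‖ / umax * (⟪u, e1⟫ * a + ⟪u, e2⟫ * b) = -(‖rdot‖ * (t₁ * a + t₂ * b)) by
      ring]
  have hcorner_ge : ‖rdot‖ * (t₁ * a + t₂ * b) ≤ ‖rdot‖ * (x * a + y * b) :=
    mul_le_mul_of_nonneg_left (add_le_add hxa hyb) (norm_nonneg _)
  exact (hswarm'.trans hcorner_ge).not_gt (hcorner x hx y hy)

/-- Lemma 1 of the paper (constraint incompatibility): if none of the four
corner conditions hold, then no control simultaneously satisfies the control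
bound, the two active-wall conditions, and the swarming constraint. -/
theorem stmt_9 (umax α : ℝ) (humax : 0 < umax) (hα : 1 ≤ α)
    (r rdot : EuclideanSpace ℝ (Fin 2)) (hr : r ≠ 0)
    (hcorner : ∀ x ∈ ({1 / α, 1} : Set ℝ), ∀ y ∈ ({1 / α, 1} : Set ℝ),
      ‖rdot‖ * (x * ⟪e1, ‖r‖⁻¹ • r⟫ + y * ⟪e2, ‖r‖⁻¹ • r⟫)
        < ⟪rdot, ‖r‖⁻¹ • r⟫) :
    ¬ ∃ u : EuclideanSpace ℝ (Fin 2),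
      infNorm u ≤ umax ∧
      ⟪u, e1⟫ ≤ -(umax / α) ∧
      ⟪u, e2⟫ ≤ -(umax / α) ∧
      (‖rdot‖ / umax) * ⟪u, ‖r‖⁻¹ • r⟫ + ⟪rdot, ‖r‖⁻¹ • r⟫ ≤ 0 :=
  stmt_9_general umax α humax r rdot hcorner
end

section
/- (Lemma 3 of the paper.) Let u_max > 0 and α ≥ 1 be real constants, e₁ = (1,0), e₂ = (0,1). Let r, ṙ, d, ḋ ∈ ℝ² with r ≠ 0 and d ≠ 0, and set r̂ = r/‖r‖, d̂ = d/‖d‖. Suppose there is no pair (x, y) with 1/α ≤ x ≤ 1 and 1/α ≤ y ≤ 1 satisfying both ‖ṙ‖ · (x · ⟪e₁, r̂⟫ + y · ⟪e₂, r̂⟫) ≥ ⟪ṙ, r̂⟫ and −‖ḋ‖ · (x · ⟪e₁, d̂⟫ + y · ⟪e₂, d̂⟫) ≥ −⟪ḋ, d̂⟫. Then there is no u ∈ ℝ² satisfying simultaneously: ‖u‖_∞ ≤ u_max, ⟪u, e₁⟫ ≤ −u_max/α, ⟪u, e₂⟫ ≤ −u_max/α, the swarming constraint (‖ṙ‖/u_max)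 · ⟪u, r̂⟫ + ⟪ṙ, r̂⟫ ≤ 0, and the predator-avoidance constraint −(‖ḋ‖/u_max) · ⟪u, d̂⟫ − ⟪ḋ, d̂⟫ ≤ 0. -/
open scoped RealInnerProductSpace

lemma mem_Icc_neg_div_of_abs_le_of_le_neg_div {c α t : ℝ} (hc : 0 < c) (hbound : |t| ≤ c)
    (hwall : t ≤ -(c / α)) : 1 / α ≤ -t / c ∧ -t / c ≤ 1 := by
  constructor
  · calc 1 / α = (c / α) / c := by field_simp
      _ ≤ -t / c := by gcongr; linarith
  · rw [div_le_one hc]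
    linarith [neg_abs_le t]

lemma mul_coords_inner_eq_neg_div_mul_inner {c : ℝ} (hc : c ≠ 0) (a : ℝ)
    (u v : EuclideanSpace ℝ (Fin 2)) :
    a * (-⟪u, e1⟫ / c * ⟪e1, v⟫ + -⟪u, e2⟫ / c * ⟪e2, v⟫) = -(a / c * ⟪u, v⟫) := by
  rw [inner_eq_inner_e1_mul_add_inner_e2_mul u v]
  field_simp
  ring

theorem stmt_12_general (umax α : ℝ) (humax : 0 < umax)
    (r rdot d ddot : EuclideanSpace ℝ (Fin 2))
    (hnosol : ¬ ∃ x y : ℝ, 1 / α ≤ x ∧ x ≤ 1 ∧ 1 / α ≤ y ∧ y ≤ 1 ∧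
      ‖rdot‖ * (x * ⟪e1, ‖r‖⁻¹ • r⟫ + y * ⟪e2, ‖r‖⁻¹ • r⟫) ≥ ⟪rdot, ‖r‖⁻¹ • r⟫ ∧
      -(‖ddot‖ * (x * ⟪e1, ‖d‖⁻¹ • d⟫ + y * ⟪e2, ‖d‖⁻¹ • d⟫))
        ≥ -⟪ddot, ‖d‖⁻¹ • d⟫) :
    ¬ ∃ u : EuclideanSpace ℝ (Fin 2),
      infNorm u ≤ umax ∧
      ⟪u, e1⟫ ≤ -(umax / α) ∧
      ⟪u, e2⟫ ≤ -(umax / α) ∧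
      (‖rdot‖ / umax) * ⟪u, ‖r‖⁻¹ • r⟫ + ⟪rdot, ‖r‖⁻¹ • r⟫ ≤ 0 ∧
      -((‖ddot‖ / umax) * ⟪u, ‖d‖⁻¹ • d⟫) - ⟪ddot, ‖d‖⁻¹ • d⟫ ≤ 0 := by
  rintro ⟨u, hbound, hwall1, hwall2, hswarm, hpred⟩
  obtain ⟨hx1, hx2⟩ := mem_Icc_neg_div_of_abs_le_of_le_neg_div humax
    ((le_max_left _ _).trans hbound) hwall1
  obtain ⟨hy1, hy2⟩ := mem_Icc_neg_div_of_abs_le_of_le_neg_div humax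
    ((le_max_right _ _).trans hbound) hwall2
  refine hnosol ⟨-⟪u, e1⟫ / umax, -⟪u, e2⟫ / umax, hx1, hx2, hy1, hy2, ?_, ?_⟩
  · rw [mul_coords_inner_eq_neg_div_mul_inner humax.ne']
    linarith
  · rw [mul_coords_inner_eq_neg_div_mul_inner humax.ne']
    linarith

/-- Lemma 3 of the paper (joint constraint incompatibility): if the reduced 2×2
linear inequality system has no solution in the box `[1/α, 1]²`, then no control
simultaneously satisfies the control bound, the two active-wall conditions, the
swarming constraint, and the predator-avoidance constraint. -/
theorem stmt_12 (umax α : ℝ) (humax : 0 < umax) (hα : 1 ≤ α)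
    (r rdot d ddot : EuclideanSpace ℝ (Fin 2)) (hr : r ≠ 0) (hd : d ≠ 0)
    (hnosol : ¬ ∃ x y : ℝ, 1 / α ≤ x ∧ x ≤ 1 ∧ 1 / α ≤ y ∧ y ≤ 1 ∧
      ‖rdot‖ * (x * ⟪e1, ‖r‖⁻¹ • r⟫ + y * ⟪e2, ‖r‖⁻¹ • r⟫) ≥ ⟪rdot, ‖r‖⁻¹ • r⟫ ∧
      -(‖ddot‖ * (x * ⟪e1, ‖d‖⁻¹ • d⟫ + y * ⟪e2, ‖d‖⁻¹ • d⟫))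
        ≥ -⟪ddot, ‖d‖⁻¹ • d⟫) :
    ¬ ∃ u : EuclideanSpace ℝ (Fin 2),
      infNorm u ≤ umax ∧
      ⟪u, e1⟫ ≤ -(umax / α) ∧
      ⟪u, e2⟫ ≤ -(umax / α) ∧
      (‖rdot‖ / umax) * ⟪u, ‖r‖⁻¹ • r⟫ + ⟪rdot, ‖r‖⁻¹ • r⟫ ≤ 0 ∧
      -((‖ddot‖ / umax) * ⟪u, ‖d‖⁻¹ • d⟫) - ⟪ddot, ‖d‖⁻¹ • d⟫ ≤ 0 :=
  stmt_12_general umax α humax r rdot d ddot hnosol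
end

section
/- (Equivalence form of Lemma 3.) Let u_max > 0 and α ≥ 1 be real constants, e₁ = (1,0), e₂ = (0,1). Let r, ṙ, d, ḋ ∈ ℝ² with r ≠ 0 and d ≠ 0, and set r̂ = r/‖r‖, d̂ = d/‖d‖. Then there exists u ∈ ℝ² satisfying ‖u‖_∞ ≤ u_max, ⟪u, e₁⟫ ≤ −u_max/α, ⟪u, e₂⟫ ≤ −u_max/α, (‖ṙ‖/u_max) · ⟪u, r̂⟫ + ⟪ṙ, r̂⟫ ≤ 0, and −(‖ḋ‖/u_max) · ⟪u, d̂⟫ − ⟪ḋ, d̂⟫ ≤ 0, if and only if there exists a pair (x, y) with 1/α ≤ x ≤ 1, 1/α ≤ y ≤ 1, ‖ṙ‖ · (x · ⟪e₁, r̂⟫ + y · ⟪e₂, r̂⟫) ≥ ⟪ṙ, r̂⟫, and ‖ḋ‖ · (x · ⟪e₁, d̂⟫ + y · ⟪e₂, d̂⟫) ≤ ⟪ḋ, d̂⟫; moreover, any such pair (x, y) yields a feasible control u = −x·u_max·e₁ − y·u_max·e₂. -/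
open scoped RealInnerProductSpace

/-!
Every control is of the form `u = -x u_max e₁ - y u_max e₂`, with `x = -⟪u, e₁⟫ / u_max` and
`y = -⟪u, e₂⟫ / u_max`. In these coordinates the bound `‖u‖_∞ ≤ u_max` together with the wall
conditions says exactly that `(x, y)` lies in the box `[1/α, 1]²`, and since `⟪u, v⟫` becomes
`-u_max (x ⟪e₁, v⟫ + y ⟪e₂, v⟫)`, the factor `u_max` cancels from the swarming and predator
constraints, which become the two linear inequalities of the reduced system.
-/

lemma inner_e1_right (u : EuclideanSpace ℝ (Fin 2)) : ⟪u, e1⟫ = u 0 := by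
  simp [e1, EuclideanSpace.inner_single_right]

lemma inner_e2_right (u : EuclideanSpace ℝ (Fin 2)) : ⟪u, e2⟫ = u 1 := by
  simp [e2, EuclideanSpace.inner_single_right]

noncomputable def wallControl (umax x y : ℝ) : EuclideanSpace ℝ (Fin 2) :=
  -(x * umax) • e1 - (y * umax) • e2

def IsFeasibleControl (umax α : ℝ) (rdot rhat ddot dhat u : EuclideanSpace ℝ (Fin 2)) : Prop :=
  infNorm u ≤ umax ∧ ⟪u, e1⟫ ≤ -(umax / α) ∧ ⟪u, e2⟫ ≤ -(umax / α) ∧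
    (‖rdot‖ / umax) * ⟪u, rhat⟫ + ⟪rdot, rhat⟫ ≤ 0 ∧
    -((‖ddot‖ / umax) * ⟪u, dhat⟫) - ⟪ddot, dhat⟫ ≤ 0

def IsReducedSolution (α : ℝ) (rdot rhat ddot dhat : EuclideanSpace ℝ (Fin 2)) (x y : ℝ) :
    Prop :=
  1 / α ≤ x ∧ x ≤ 1 ∧ 1 / α ≤ y ∧ y ≤ 1 ∧
    ‖rdot‖ * (x * ⟪e1, rhat⟫ + y * ⟪e2, rhat⟫) ≥ ⟪rdot, rhat⟫ ∧
    ‖ddot‖ * (x * ⟪e1, dhat⟫ + y * ⟪e2, dhat⟫) ≤ ⟪ddot, dhat⟫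

lemma inner_wallControl_left (umax x y : ℝ) (v : EuclideanSpace ℝ (Fin 2)) :
    ⟪wallControl umax x y, v⟫ = -umax * (x * ⟪e1, v⟫ + y * ⟪e2, v⟫) := by
  simp only [wallControl, inner_sub_left, inner_smul_left, RCLike.conj_to_real]
  ring

lemma inner_wallControl_e1 (umax x y : ℝ) : ⟪wallControl umax x y, e1⟫ = -(x * umax) := by
  rw [inner_e1_right]
  simp [wallControl, e1, e2]

lemma inner_wallControl_e2 (umax x y : ℝ) : ⟪wallControl umax x y, e2⟫ = -(y * umax) := by
  rw [inner_e2_right]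
  simp [wallControl, e1, e2]

lemma eq_wallControl {umax : ℝ} (humax : umax ≠ 0) (u : EuclideanSpace ℝ (Fin 2)) :
    u = wallControl umax (-⟪u, e1⟫ / umax) (-⟪u, e2⟫ / umax) := by
  rw [inner_e1_right, inner_e2_right]
  ext i
  fin_cases i <;> simp [wallControl, e1, e2, humax]

section OrderedField

variable {𝕜 : Type*} [Field 𝕜] [LinearOrder 𝕜] [IsStrictOrderedRing 𝕜]

lemma infNorm_wallControl (umax x y : ℝ) :
    infNorm (wallControl umax x y) = max |x * umax| |y * umax| := by
  rw [infNorm, inner_wallControl_e1, inner_wallControl_e2, abs_neg, abs_neg]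

lemma abs_mul_le_self_iff {a t : 𝕜} (ha : 0 < a) : |t * a| ≤ a ↔ |t| ≤ 1 := by
  rw [abs_mul, abs_of_pos ha, mul_le_iff_le_one_left ha]

lemma neg_mul_le_neg_div_iff {a b t : 𝕜} (ha : 0 < a) : -(t * a) ≤ -(a / b) ↔ 1 / b ≤ t := by
  rw [neg_le_neg_iff, div_eq_mul_one_div a b, mul_comm a, mul_le_mul_iff_left₀ ha]

end OrderedField

lemma isFeasibleControl_wallControl_iff {umax α : ℝ} (humax : 0 < umax) (hα : 0 < α)
    (rdot rhat ddot dhat : EuclideanSpace ℝ (Fin 2)) (x y : ℝ) :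
    IsFeasibleControl umax α rdot rhat ddot dhat (wallControl umax x y) ↔
      IsReducedSolution α rdot rhat ddot dhat x y := by
  have hcancel (a s : ℝ) : a / umax * (-umax * s) = -(a * s) := by field_simp
  have hbox {t : ℝ} (ht : 1 / α ≤ t) : |t| ≤ 1 ↔ t ≤ 1 := by
    rw [abs_of_pos (lt_of_lt_of_le (by positivity) ht)]
  rw [IsFeasibleControl, IsReducedSolution, infNorm_wallControl, max_le_iff,
    abs_mul_le_self_iff humax, abs_mul_le_self_iff humax, inner_wallControl_e1,
    inner_wallControl_e2, neg_mul_le_neg_div_iff humax, neg_mul_le_neg_div_iff humax,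
    inner_wallControl_left, inner_wallControl_left, hcancel, hcancel, neg_add_nonpos_iff,
    neg_neg, sub_nonpos]
  constructor
  · rintro ⟨⟨hx, hy⟩, hx', hy', hr, hd⟩
    exact ⟨hx', (hbox hx').mp hx, hy', (hbox hy').mp hy, hr, hd⟩
  · rintro ⟨hx', hx, hy', hy, hr, hd⟩
    exact ⟨⟨(hbox hx').mpr hx, (hbox hy').mpr hy⟩, hx', hy', hr, hd⟩

theorem stmt_13_general (umax α : ℝ) (humax : 0 < umax) (hα : 1 ≤ α)
    (r rdot d ddot : EuclideanSpace ℝ (Fin 2)) :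
    ((∃ u : EuclideanSpace ℝ (Fin 2),
        infNorm u ≤ umax ∧
        ⟪u, e1⟫ ≤ -(umax / α) ∧
        ⟪u, e2⟫ ≤ -(umax / α) ∧
        (‖rdot‖ / umax) * ⟪u, ‖r‖⁻¹ • r⟫ + ⟪rdot, ‖r‖⁻¹ • r⟫ ≤ 0 ∧
        -((‖ddot‖ / umax) * ⟪u, ‖d‖⁻¹ • d⟫) - ⟪ddot, ‖d‖⁻¹ • d⟫ ≤ 0) ↔
      (∃ x y : ℝ, 1 / α ≤ x ∧ x ≤ 1 ∧ 1 / α ≤ y ∧ y ≤ 1 ∧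
        ‖rdot‖ * (x * ⟪e1, ‖r‖⁻¹ • r⟫ + y * ⟪e2, ‖r‖⁻¹ • r⟫)
          ≥ ⟪rdot, ‖r‖⁻¹ • r⟫ ∧
        ‖ddot‖ * (x * ⟪e1, ‖d‖⁻¹ • d⟫ + y * ⟪e2, ‖d‖⁻¹ • d⟫)
          ≤ ⟪ddot, ‖d‖⁻¹ • d⟫)) ∧
    (∀ x y : ℝ, 1 / α ≤ x → x ≤ 1 → 1 / α ≤ y → y ≤ 1 →
      ‖rdot‖ * (x * ⟪e1, ‖r‖⁻¹ • r⟫ + y * ⟪e2, ‖r‖⁻¹ • r⟫)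
        ≥ ⟪rdot, ‖r‖⁻¹ • r⟫ →
      ‖ddot‖ * (x * ⟪e1, ‖d‖⁻¹ • d⟫ + y * ⟪e2, ‖d‖⁻¹ • d⟫)
        ≤ ⟪ddot, ‖d‖⁻¹ • d⟫ →
      (infNorm (-(x * umax) • e1 - (y * umax) • e2) ≤ umax ∧
       ⟪(-(x * umax) • e1 - (y * umax) • e2 : EuclideanSpace ℝ (Fin 2)), e1⟫
         ≤ -(umax / α) ∧
       ⟪(-(x * umax) • e1 - (y * umax) • e2 : EuclideanSpace ℝ (Fin 2)), e2⟫
         ≤ -(umax / α) ∧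
       (‖rdot‖ / umax) *
           ⟪(-(x * umax) • e1 - (y * umax) • e2 : EuclideanSpace ℝ (Fin 2)),
             ‖r‖⁻¹ • r⟫ + ⟪rdot, ‖r‖⁻¹ • r⟫ ≤ 0 ∧
       -((‖ddot‖ / umax) *
           ⟪(-(x * umax) • e1 - (y * umax) • e2 : EuclideanSpace ℝ (Fin 2)),
             ‖d‖⁻¹ • d⟫) - ⟪ddot, ‖d‖⁻¹ • d⟫ ≤ 0)) := by
  have hreduce := isFeasibleControl_wallControl_iff humax (zero_lt_one.trans_le hα)
    rdot (‖r‖⁻¹ • r) ddot (‖d‖⁻¹ • d)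
  refine ⟨⟨fun ⟨u, hu⟩ => ?_, fun ⟨x, y, hxy⟩ => ⟨wallControl umax x y, (hreduce x y).mpr hxy⟩⟩,
    fun x y hx₁ hx₂ hy₁ hy₂ hr hd => (hreduce x y).mpr ⟨hx₁, hx₂, hy₁, hy₂, hr, hd⟩⟩
  rw [eq_wallControl humax.ne' u] at hu
  exact ⟨_, _, (hreduce _ _).mp hu⟩

/-- Equivalence form of Lemma 3: joint feasibility of the control bound, the two
active-wall conditions, the swarming constraint, and the predator-avoidance
constraint is equivalent to solvability of the reduced 2×2 linear inequality
system over the box `[1/α, 1]²`; moreover any solution `(x, y)` of the reduced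
system yields the feasible control `u = −x u_max e₁ − y u_max e₂`. -/
theorem stmt_13 (umax α : ℝ) (humax : 0 < umax) (hα : 1 ≤ α)
    (r rdot d ddot : EuclideanSpace ℝ (Fin 2)) (hr : r ≠ 0) (hd : d ≠ 0) :
    ((∃ u : EuclideanSpace ℝ (Fin 2),
        infNorm u ≤ umax ∧
        ⟪u, e1⟫ ≤ -(umax / α) ∧
        ⟪u, e2⟫ ≤ -(umax / α) ∧
        (‖rdot‖ / umax) * ⟪u, ‖r‖⁻¹ • r⟫ + ⟪rdot, ‖r‖⁻¹ • r⟫ ≤ 0 ∧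
        -((‖ddot‖ / umax) * ⟪u, ‖d‖⁻¹ • d⟫) - ⟪ddot, ‖d‖⁻¹ • d⟫ ≤ 0) ↔
      (∃ x y : ℝ, 1 / α ≤ x ∧ x ≤ 1 ∧ 1 / α ≤ y ∧ y ≤ 1 ∧
        ‖rdot‖ * (x * ⟪e1, ‖r‖⁻¹ • r⟫ + y * ⟪e2, ‖r‖⁻¹ • r⟫)
          ≥ ⟪rdot, ‖r‖⁻¹ • r⟫ ∧
        ‖ddot‖ * (x * ⟪e1, ‖d‖⁻¹ • d⟫ + y * ⟪e2, ‖d‖⁻¹ • d⟫)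
          ≤ ⟪ddot, ‖d‖⁻¹ • d⟫)) ∧
    (∀ x y : ℝ, 1 / α ≤ x → x ≤ 1 → 1 / α ≤ y → y ≤ 1 →
      ‖rdot‖ * (x * ⟪e1, ‖r‖⁻¹ • r⟫ + y * ⟪e2, ‖r‖⁻¹ • r⟫)
        ≥ ⟪rdot, ‖r‖⁻¹ • r⟫ →
      ‖ddot‖ * (x * ⟪e1, ‖d‖⁻¹ • d⟫ + y * ⟪e2, ‖d‖⁻¹ • d⟫)
        ≤ ⟪ddot, ‖d‖⁻¹ • d⟫ →
      (infNorm (-(x * umax) • e1 - (y * umax) • e2) ≤ umax ∧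
       ⟪(-(x * umax) • e1 - (y * umax) • e2 : EuclideanSpace ℝ (Fin 2)), e1⟫
         ≤ -(umax / α) ∧
       ⟪(-(x * umax) • e1 - (y * umax) • e2 : EuclideanSpace ℝ (Fin 2)), e2⟫
         ≤ -(umax / α) ∧
       (‖rdot‖ / umax) *
           ⟪(-(x * umax) • e1 - (y * umax) • e2 : EuclideanSpace ℝ (Fin 2)),
             ‖r‖⁻¹ • r⟫ + ⟪rdot, ‖r‖⁻¹ • r⟫ ≤ 0 ∧
       -((‖ddot‖ / umax) *
           ⟪(-(x * umax) • e1 - (y * umax) • e2 : EuclideanSpace ℝ (Fin 2)),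
             ‖d‖⁻¹ • d⟫) - ⟪ddot, ‖d‖⁻¹ • d⟫ ≤ 0)) :=
  stmt_13_general umax α humax hα r rdot d ddot
end
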